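/- arXiv:1007.2364 — 4 statements merged into one kernel-verified Lean document; each statement's English description precedes it below -/
import Mathlib

section
/- Soundness of the ⊔-elimination rule: suppose Φ₁ maps realizers of Γ₁ to realizers of t:C₁⊔C₂; Φ₂ maps realizers of Γ₂∪{t:C₁} to realizers of K; and Φ₃ maps realizers of Γ₃∪{t:C₂} to realizers of K (each uniformly over all models). Define Φ(γ̄) = Φ₂(γ̄₂,α) if Φ₁(γ̄₁) = (1,α), and Φ(γ̄) = Φ₃(γ̄₃,α) if Φ₁(γ̄₁) = (2,α). Then for every model M, M ⊩_{γ̄} Γ₁∪Γ₂∪Γ₃ implies M ⊩_{Φ(γ̄)} K. -/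
namespace ITSem

inductive Concept (NC NR : Type) : Type where
  | atom : NC → Concept NC NR
  | neg : Concept NC NR → Concept NC NR
  | inter : Concept NC NR → Concept NC NR → Concept NC NR
  | union : Concept NC NR → Concept NC NR → Concept NC NR
  | ex : NR → Concept NC NR → Concept NC NR
  | all : NR → Concept NC NR → Concept NC NR

inductive Formula (N NC NR : Type) : Type where
  | bot : Formula N NC NR
  | role : N → N → NR → Formula N NC NR
  | conc : N → Concept NC NR → Formula N NC NR
  | subsum : NC → Concept NC NR → Formula N NC NR

structure Model (N NC NR : Type) where
  D : Type
  dNonempty : Nonempty D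
  indiv : N → D
  cname : NC → Set D
  rel : NR → D → D → Prop

def Model.interp {N NC NR : Type} (M : Model N NC NR) : Concept NC NR → Set M.D
  | .atom A => M.cname A
  | .neg C => (M.interp C)ᶜ
  | .inter C D => M.interp C ∩ M.interp D
  | .union C D => M.interp C ∪ M.interp D
  | .ex R C => {x | ∃ y, M.rel R x y ∧ y ∈ M.interp C}
  | .all R C => {x | ∀ y, M.rel R x y → y ∈ M.interp C}

def Model.valid {N NC NR : Type} (M : Model N NC NR) : Formula N NC NR → Prop
  | .bot => False
  | .role c d R => M.rel R (M.indiv c) (M.indiv d)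
  | .conc c C => M.indiv c ∈ M.interp C
  | .subsum A C => M.cname A ⊆ M.interp C

def ITc (N NC NR : Type) : Concept NC NR → Type
  | .atom _ => Unit
  | .neg _ => Unit
  | .inter C D => ITc N NC NR C × ITc N NC NR D
  | .union C D => ITc N NC NR C ⊕ ITc N NC NR D
  | .ex _ C => N × ITc N NC NR C
  | .all _ C => N → ITc N NC NR C

def ITf (N NC NR : Type) : Formula N NC NR → Type
  | .bot => Unit
  | .role _ _ _ => Unit
  | .conc _ C => ITc N NC NR C
  | .subsum _ C => N → ITc N NC NR C

def realc {N NC NR : Type} (M : Model N NC NR) :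
    (C : Concept NC NR) → N → ITc N NC NR C → Prop
  | .atom A, c, _ => M.indiv c ∈ M.cname A
  | .neg C, c, _ => M.indiv c ∈ M.interp (.neg C)
  | .inter C D, c, η => realc M C c η.1 ∧ realc M D c η.2
  | .union C D, c, η =>
      match η with
      | Sum.inl α => realc M C c α
      | Sum.inr β => realc M D c β
  | .ex R C, c, η => M.rel R (M.indiv c) (M.indiv η.1) ∧ realc M C η.1 η.2
  | .all R C, c, φ =>
      M.indiv c ∈ M.interp (.all R C) ∧
      ∀ d, M.rel R (M.indiv c) (M.indiv d) → realc M C d (φ d)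

def real {N NC NR : Type} (M : Model N NC NR) :
    (K : Formula N NC NR) → ITf N NC NR K → Prop
  | .bot, _ => False
  | .role c d R, _ => M.rel R (M.indiv c) (M.indiv d)
  | .conc c C, η => realc M C c η
  | .subsum A C, φ =>
      M.cname A ⊆ M.interp C ∧
      ∀ d, M.indiv d ∈ M.cname A → realc M C d (φ d)

def ITl (N NC NR : Type) : List (Formula N NC NR) → Type
  | [] => PUnit
  | K :: Γ => ITf N NC NR K × ITl N NC NR Γ

def reall {N NC NR : Type} (M : Model N NC NR) :
    (Γ : List (Formula N NC NR)) → ITl N NC NR Γ → Prop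
  | [], _ => True
  | K :: Γ, η => real M K η.1 ∧ reall M Γ η.2

def splitIT {N NC NR : Type} :
    (Γ₁ Γ₂ : List (Formula N NC NR)) → ITl N NC NR (Γ₁ ++ Γ₂) →
      ITl N NC NR Γ₁ × ITl N NC NR Γ₂
  | [], _, γ => (PUnit.unit, γ)
  | _ :: Γ₁, Γ₂, γ => ((γ.1, (splitIT Γ₁ Γ₂ γ.2).1), (splitIT Γ₁ Γ₂ γ.2).2)

theorem reall_append_iff {N NC NR : Type} (M : Model N NC NR) :
    ∀ (Γ₁ Γ₂ : List (Formula N NC NR)) (γ : ITl N NC NR (Γ₁ ++ Γ₂)),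
      reall M (Γ₁ ++ Γ₂) γ ↔
        reall M Γ₁ (splitIT Γ₁ Γ₂ γ).1 ∧ reall M Γ₂ (splitIT Γ₁ Γ₂ γ).2
  | [], _, _ => ⟨fun h => ⟨trivial, h⟩, And.right⟩
  | _ :: Γ₁, Γ₂, γ =>
    (and_congr_right fun _ => reall_append_iff M Γ₁ Γ₂ γ.2).trans and_assoc.symm

theorem union_elim_sound {N NC NR : Type} (Γ₁ Γ₂ Γ₃ : List (Formula N NC NR)) (t : N)
    (C₁ C₂ : Concept NC NR) (K : Formula N NC NR)
    (Φ₁ : ITl N NC NR Γ₁ → ITc N NC NR C₁ ⊕ ITc N NC NR C₂)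
    (Φ₂ : ITl N NC NR Γ₂ → ITc N NC NR C₁ → ITf N NC NR K)
    (Φ₃ : ITl N NC NR Γ₃ → ITc N NC NR C₂ → ITf N NC NR K)
    (h₁ : ∀ (M : Model N NC NR) γ₁, reall M Γ₁ γ₁ → realc M (.union C₁ C₂) t (Φ₁ γ₁))
    (h₂ : ∀ (M : Model N NC NR) γ₂ α, reall M Γ₂ γ₂ → realc M C₁ t α → real M K (Φ₂ γ₂ α))
    (h₃ : ∀ (M : Model N NC NR) γ₃ β, reall M Γ₃ γ₃ → realc M C₂ t β → real M K (Φ₃ γ₃ β)) :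
    ∀ (M : Model N NC NR) (γ : ITl N NC NR (Γ₁ ++ (Γ₂ ++ Γ₃))),
      reall M (Γ₁ ++ (Γ₂ ++ Γ₃)) γ →
      real M K
        (match Φ₁ (splitIT Γ₁ (Γ₂ ++ Γ₃) γ).1 with
          | Sum.inl α => Φ₂ (splitIT Γ₂ Γ₃ (splitIT Γ₁ (Γ₂ ++ Γ₃) γ).2).1 α
          | Sum.inr β => Φ₃ (splitIT Γ₂ Γ₃ (splitIT Γ₁ (Γ₂ ++ Γ₃) γ).2).2 β) := by
  intro M γ hγ
  obtain ⟨hγ₁, hγ₂₃⟩ := (reall_append_iff M Γ₁ (Γ₂ ++ Γ₃) γ).1 hγ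
  obtain ⟨hγ₂, hγ₃⟩ := (reall_append_iff M Γ₂ Γ₃ _).1 hγ₂₃
  have hη := h₁ M _ hγ₁
  generalize Φ₁ _ = η at hη ⊢
  cases η with
  | inl α => exact h₂ M _ α hγ₂ hη
  | inr β => exact h₃ M _ β hγ₃ hη

end ITSem
end

section
/- Soundness of the subsumption-elimination rule (⊑E): if Φ maps realizers of Γ to realizers (necessarily tt) of t:A uniformly, then the operator (γ̄, φ) ↦ φ(t) maps realizers of Γ∪{A⊑C} to realizers of t:C: if M ⊩_{γ̄} Γ and M ⊩_φ A⊑C, then M ⊩_{φ(t)} t:C. -/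
namespace ITSem

theorem real_subsum_apply {N NC NR : Type} {M : Model N NC NR} {A : NC} {C : Concept NC NR}
    {φ : ITf N NC NR (.subsum A C)} (hφ : real M (.subsum A C) φ) {d : N}
    (hd : M.indiv d ∈ M.cname A) : realc M C d (φ d) :=
  hφ.2 d hd

theorem subsum_elim_sound {N NC NR : Type} (Γ : List (Formula N NC NR)) (t : N)
    (A : NC) (C : Concept NC NR)
    (Φ : ITl N NC NR Γ → ITc N NC NR (.atom A))
    (hΦ : ∀ (M : Model N NC NR) γ, reall M Γ γ → realc M (.atom A) t (Φ γ)) :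
    ∀ (M : Model N NC NR) (γ : ITl N NC NR Γ) (φ : ITf N NC NR (.subsum A C)),
      reall M Γ γ → real M (.subsum A C) φ → realc M C t (φ t) :=
  fun M γ _ hγ hφ => real_subsum_apply hφ (hΦ M γ hγ)

end ITSem
end

section
/- Soundness of the ⊥-introduction rule: if Φ₁ maps realizers of Γ₁ to realizers of t:C and Φ₂ maps realizers of Γ₂ to realizers of t:¬C (uniformly over all models), then no model realizes Γ₁∪Γ₂; i.e., for every model M and every γ̄, not M ⊩_{γ̄} Γ₁∪Γ₂. Equivalently, any operator into IT_N(⊥) = {tt} vacuously maps realizers of Γ₁∪Γ₂ to realizers of ⊥. -/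
namespace ITSem

/-! Realizability implies classical truth, so splitting a realizer of `Γ₁ ++ Γ₂` and feeding the
halves to `Φ₁` and `Φ₂` would place `t` both in `C` and in its complement. -/

section

variable {N NC NR : Type} (M : Model N NC NR)

theorem mem_interp_of_realc :
    ∀ (C : Concept NC NR) (c : N) (η : ITc N NC NR C),
      realc M C c η → M.indiv c ∈ M.interp C
  | .atom _, _, _, h => h
  | .neg _, _, _, h => h
  | .inter C D, c, η, h => ⟨mem_interp_of_realc C c η.1 h.1, mem_interp_of_realc D c η.2 h.2⟩
  | .union C _, c, .inl α, h => Or.inl (mem_interp_of_realc C c α h)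
  | .union _ D, c, .inr β, h => Or.inr (mem_interp_of_realc D c β h)
  | .ex _ C, _, η, h => ⟨M.indiv η.1, h.1, mem_interp_of_realc C η.1 η.2 h.2⟩
  | .all _ _, _, _, h => h.1

theorem reall_splitIT :
    ∀ (Γ₁ Γ₂ : List (Formula N NC NR)) (γ : ITl N NC NR (Γ₁ ++ Γ₂)),
      reall M (Γ₁ ++ Γ₂) γ →
        reall M Γ₁ (splitIT Γ₁ Γ₂ γ).1 ∧ reall M Γ₂ (splitIT Γ₁ Γ₂ γ).2
  | [], _, _, h => ⟨trivial, h⟩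
  | _ :: Γ₁, Γ₂, γ, h =>
      have ih := reall_splitIT Γ₁ Γ₂ γ.2 h.2
      ⟨⟨h.1, ih.1⟩, ih.2⟩

theorem not_realc_of_realc_neg {C : Concept NC NR} {c : N} {η : ITc N NC NR C}
    {η' : ITc N NC NR (.neg C)} (h : realc M C c η) : ¬ realc M (.neg C) c η' :=
  fun h' => h' (mem_interp_of_realc M C c η h)

end

theorem bot_intro_sound {N NC NR : Type} (Γ₁ Γ₂ : List (Formula N NC NR)) (t : N)
    (C : Concept NC NR)
    (Φ₁ : ITl N NC NR Γ₁ → ITc N NC NR C)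
    (Φ₂ : ITl N NC NR Γ₂ → ITc N NC NR (.neg C))
    (h₁ : ∀ (M : Model N NC NR) γ₁, reall M Γ₁ γ₁ → realc M C t (Φ₁ γ₁))
    (h₂ : ∀ (M : Model N NC NR) γ₂, reall M Γ₂ γ₂ → realc M (.neg C) t (Φ₂ γ₂)) :
    (∀ (M : Model N NC NR) (γ : ITl N NC NR (Γ₁ ++ Γ₂)), ¬ reall M (Γ₁ ++ Γ₂) γ) ∧
    (∀ (Φ : ITl N NC NR (Γ₁ ++ Γ₂) → ITf N NC NR .bot)
       (M : Model N NC NR) (γ : ITl N NC NR (Γ₁ ++ Γ₂)),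
         reall M (Γ₁ ++ Γ₂) γ → real M .bot (Φ γ)) := by
  have inconsistent : ∀ (M : Model N NC NR) (γ : ITl N NC NR (Γ₁ ++ Γ₂)),
      ¬ reall M (Γ₁ ++ Γ₂) γ := by
    intro M γ hγ
    obtain ⟨hγ₁, hγ₂⟩ := reall_splitIT M Γ₁ Γ₂ γ hγ
    exact not_realc_of_realc_neg M (h₁ M _ hγ₁) (h₂ M _ hγ₂)
  exact ⟨inconsistent, fun _ M γ hγ => absurd hγ (inconsistent M γ)⟩

end ITSem
end

section
/- Soundness of the SEQ composition rule for two services: let (s₁,Φ₁) with specification A₁ ⇒ B₁ and (s₂,Φ₂) with specification A₂ ⇒ B₂ be service definitions, and let Φ_b1, Φ_b2, Φ_c be operators witnessing, in every model M of the environment, that realizers of x:A map to realizers of x:A₁, realizers of x:B₁ map to realizers of x:A₂, and realizers of x:B₂ map to realizers of x:B, respectively (uniformly for all x∈N). Then Φ_s := Φ_c ∘ Φ₂ ∘ Φ_b2 ∘ Φ₁ ∘ Φ_b1 uniformly solves the specification s(x) :: A ⇒ B in every model of the environment. -/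
namespace ITSem

structure Env (N NC NR : Type) (n : ℕ) where
  T : List (Formula N NC NR)
  η : ITl N NC NR T
  pre : Fin n → Concept NC NR
  post : Fin n → Concept NC NR
  impl : (i : Fin n) → ITc N NC NR (pre i) → ITc N NC NR (post i)

def UniformlySolves {N NC NR : Type} (M : Model N NC NR) (P Q : Concept NC NR)
    (Φ : ITc N NC NR P → ITc N NC NR Q) : Prop :=
  ∀ (t : N) (α : ITc N NC NR P), realc M P t α → realc M Q t (Φ α)

def Env.IsModel {N NC NR : Type} {n : ℕ} (E : Env N NC NR n) (M : Model N NC NR) : Prop :=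
  reall M E.T E.η ∧ ∀ i, UniformlySolves M (E.pre i) (E.post i) (E.impl i)

theorem UniformlySolves.comp {N NC NR : Type} {M : Model N NC NR} {P Q R : Concept NC NR}
    {Ψ : ITc N NC NR Q → ITc N NC NR R} {Φ : ITc N NC NR P → ITc N NC NR Q}
    (hΨ : UniformlySolves M Q R Ψ) (hΦ : UniformlySolves M P Q Φ) :
    UniformlySolves M P R (Ψ ∘ Φ) :=
  fun t α hα => hΨ t (Φ α) (hΦ t α hα)

theorem seq_rule_sound {N NC NR : Type} {n : ℕ} (E : Env N NC NR n)
    (A A₁ B₁ A₂ B₂ B : Concept NC NR)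
    (Φ₁ : ITc N NC NR A₁ → ITc N NC NR B₁) (Φ₂ : ITc N NC NR A₂ → ITc N NC NR B₂)
    (Φb1 : ITc N NC NR A → ITc N NC NR A₁) (Φb2 : ITc N NC NR B₁ → ITc N NC NR A₂)
    (Φc : ITc N NC NR B₂ → ITc N NC NR B)
    (h₁ : ∀ (M : Model N NC NR), E.IsModel M → UniformlySolves M A₁ B₁ Φ₁)
    (h₂ : ∀ (M : Model N NC NR), E.IsModel M → UniformlySolves M A₂ B₂ Φ₂)
    (hb1 : ∀ (M : Model N NC NR), E.IsModel M →
      ∀ (x : N) α, realc M A x α → realc M A₁ x (Φb1 α))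
    (hb2 : ∀ (M : Model N NC NR), E.IsModel M →
      ∀ (x : N) β, realc M B₁ x β → realc M A₂ x (Φb2 β))
    (hc : ∀ (M : Model N NC NR), E.IsModel M →
      ∀ (x : N) β, realc M B₂ x β → realc M B x (Φc β)) :
    ∀ (M : Model N NC NR), E.IsModel M →
      UniformlySolves M A B (fun α => Φc (Φ₂ (Φb2 (Φ₁ (Φb1 α))))) := by
  intro M hM
  exact UniformlySolves.comp (hc M hM) <| UniformlySolves.comp (h₂ M hM) <|
    UniformlySolves.comp (hb2 M hM) <| UniformlySolves.comp (h₁ M hM) (hb1 M hM)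

end ITSem
end
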